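/- arXiv:1803.04583 — 4 statements merged into one kernel-verified Lean document; each statement's English description precedes it below -/
import Mathlib

section
/- Two matrices A, B in SL₂(ℂ) have a common eigenvector (i.e., the representation of the free group F₂ sending the generators to A and B is reducible) if and only if tr(A)² + tr(B)² + tr(AB)² − tr(A)·tr(B)·tr(AB) − 4 = 0, equivalently tr(ABA⁻¹B⁻¹) = 2. -/
/-!
A common eigenvector of `A` and `B` lies in the kernel of `AB - BA`. Conversely, `v` is an
eigenvector of a `2 × 2` matrix `M` iff it is a zero of the binary quadratic form `det (v, M v)`,
and `det (AB - BA)` is, up to sign, the resultant of the forms attached to `A` and `B`; over an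
algebraically closed field a vanishing resultant gives a common nontrivial zero. So reducibility
means `det (AB - BA) = 0`, and on `SL₂` the identities `det (AB - BA) = 2 - tr [A, B]` and
`tr [A, B] = tr² A + tr² B + tr² AB - tr A tr B tr AB - 2` convert this into both trace conditions.
-/

open Matrix

/-- The resultant of `c x² + e x y + b y²` and `r x² + f x y + q y²`. -/
def binaryQuadraticResultant {R : Type*} [CommRing R] (c e b r f q : R) : R :=
  (c * q - b * r) ^ 2 - (c * f - e * r) * (e * q - b * f)

theorem binaryQuadraticResultant_comm {R : Type*} [CommRing R] (c e b r f q : R) :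
    binaryQuadraticResultant c e b r f q = binaryQuadraticResultant r f q c e b := by
  unfold binaryQuadraticResultant; ring

section

variable {K : Type*} [Field K]

open Polynomial in
theorem IsAlgClosed.exists_sq_add_mul_add_eq_zero [IsAlgClosed K] (e d : K) :
    ∃ s : K, s ^ 2 + e * s + d = 0 := by
  have hdeg : (X ^ 2 + C e * X + C d : K[X]).degree = 2 := by compute_degree!
  obtain ⟨s, hs⟩ := IsAlgClosed.exists_root (X ^ 2 + C e * X + C d) (by rw [hdeg]; decide)
  exact ⟨s, by simpa using hs⟩

theorem exists_common_zero_of_binaryQuadraticResultant_eq_zero [IsAlgClosed K]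
    {c e b r f q : K} (hres : binaryQuadraticResultant c e b r f q = 0) :
    ∃ v : Fin 2 → K, v ≠ 0 ∧
      c * v 0 ^ 2 + e * (v 0 * v 1) + b * v 1 ^ 2 = 0 ∧
      r * v 0 ^ 2 + f * (v 0 * v 1) + q * v 1 ^ 2 = 0 := by
  wlog hc : c ≠ 0 generalizing c e b r f q
  · by_cases hr : r = 0
    · exact ⟨![1, 0], by simp, by simp [not_not.mp hc], by simp [hr]⟩
    · rw [binaryQuadraticResultant_comm] at hres
      obtain ⟨v, hv, hq, hp⟩ := this hres hr
      exact ⟨v, hv, hp, hq⟩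
  -- `s, s'` are `c` times the roots of `c t² + e t + b`, so `(s, c)` and `(s', c)` are zeros of
  -- the first form, and by Vieta the second form takes values at them with product `c² · Res`.
  obtain ⟨s, hs⟩ := IsAlgClosed.exists_sq_add_mul_add_eq_zero e (b * c)
  obtain ⟨s', hsum⟩ : ∃ s', s + s' = -e := ⟨-e - s, by ring⟩
  have hmul : s * s' = b * c := by linear_combination s * hsum - hs
  have hcv : ∀ t : K, ![t, c] ≠ 0 := fun t h => hc (by simpa using congrFun h 1)
  have hprod : (r * s ^ 2 + f * (s * c) + q * c ^ 2) * (r * s' ^ 2 + f * (s' * c) + q * c ^ 2) =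
      c ^ 2 * binaryQuadraticResultant c e b r f q := by
    unfold binaryQuadraticResultant
    linear_combination (r * f * c * s * s' + r * q * c ^ 2 * (s + s' - e) + f * q * c ^ 3) * hsum
      + (r ^ 2 * (s * s' + b * c) - r * f * c * e - 2 * r * q * c ^ 2 + f ^ 2 * c ^ 2) * hmul
  rw [hres, mul_zero] at hprod
  rcases mul_eq_zero.mp hprod with h | h
  · refine ⟨![s, c], hcv s, ?_, by simpa using h⟩
    simp only [cons_val_zero, cons_val_one]
    linear_combination c * hs
  · refine ⟨![s', c], hcv s', ?_, by simpa using h⟩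
    simp only [cons_val_zero, cons_val_one]
    linear_combination c * (s' * hsum - hmul)

theorem exists_eq_smul_iff_fin_two {u v : Fin 2 → K} (hv : v ≠ 0) :
    (∃ a : K, u = a • v) ↔ v 0 * u 1 = v 1 * u 0 := by
  constructor
  · rintro ⟨a, rfl⟩
    simp only [Pi.smul_apply, smul_eq_mul]; ring
  · intro h
    by_cases h0 : v 0 = 0
    · have h1 : v 1 ≠ 0 := fun h1 => hv (by ext i; fin_cases i <;> simp [h0, h1])
      refine ⟨u 1 / v 1, funext fun i => ?_⟩
      fin_cases i
      · simpa [h0, h1] using h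
      · simp [h1]
    · refine ⟨u 0 / v 0, funext fun i => ?_⟩
      fin_cases i
      · simp [h0]
      · simp only [Fin.mk_one, Fin.isValue, Pi.smul_apply, smul_eq_mul]
        field_simp
        linear_combination h

end

namespace Matrix

section Fin2

variable {K : Type*} [Field K]

theorem exists_mulVec_eq_smul_iff_fin_two (M : Matrix (Fin 2) (Fin 2) K) {v : Fin 2 → K}
    (hv : v ≠ 0) :
    (∃ a : K, M *ᵥ v = a • v) ↔
      M 1 0 * v 0 ^ 2 + (M 1 1 - M 0 0) * (v 0 * v 1) + -M 0 1 * v 1 ^ 2 = 0 := by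
  rw [exists_eq_smul_iff_fin_two hv, mulVec_fin_two]
  simp only [Fin.isValue, cons_val_one, cons_val_zero]
  constructor <;> intro h <;> linear_combination h

theorem det_mul_sub_mul_eq_neg_binaryQuadraticResultant {R : Type*} [CommRing R]
    (M N : Matrix (Fin 2) (Fin 2) R) :
    det (M * N - N * M) = -binaryQuadraticResultant (M 1 0) (M 1 1 - M 0 0) (-M 0 1)
      (N 1 0) (N 1 1 - N 0 0) (-N 0 1) := by
  simp [binaryQuadraticResultant, det_fin_two, mul_apply, Fin.sum_univ_two]; ring

theorem exists_common_eigenvector_iff_det_mul_sub_mul_eq_zero [IsAlgClosed K]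
    (M N : Matrix (Fin 2) (Fin 2) K) :
    (∃ v : Fin 2 → K, v ≠ 0 ∧ ∃ a b : K, M *ᵥ v = a • v ∧ N *ᵥ v = b • v) ↔
      det (M * N - N * M) = 0 := by
  rw [← exists_mulVec_eq_zero_iff]
  constructor
  · rintro ⟨v, hv, a, b, hM, hN⟩
    refine ⟨v, hv, ?_⟩
    rw [sub_mulVec, ← mulVec_mulVec, ← mulVec_mulVec, hM, hN, mulVec_smul, mulVec_smul, hM, hN,
      smul_smul, smul_smul, mul_comm, sub_self]
  · intro h
    rw [exists_mulVec_eq_zero_iff, det_mul_sub_mul_eq_neg_binaryQuadraticResultant,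
      neg_eq_zero] at h
    obtain ⟨v, hv, hM, hN⟩ := exists_common_zero_of_binaryQuadraticResultant_eq_zero h
    obtain ⟨a, ha⟩ := (exists_mulVec_eq_smul_iff_fin_two M hv).mpr hM
    obtain ⟨b, hb⟩ := (exists_mulVec_eq_smul_iff_fin_two N hv).mpr hN
    exact ⟨v, hv, a, b, ha, hb⟩

end Fin2

variable {R : Type*} [CommRing R]

theorem det_mul_sub_mul_fin_two (M N : Matrix (Fin 2) (Fin 2) R) :
    det (M * N - N * M) = 2 * det M * det N - trace (M * N * adjugate M * adjugate N) := by
  simp [det_fin_two, trace_fin_two, adjugate_fin_two, mul_apply, Fin.sum_univ_two]; ring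

theorem trace_mul_mul_adjugate_mul_adjugate_fin_two (M N : Matrix (Fin 2) (Fin 2) R) :
    trace (M * N * adjugate M * adjugate N) = det N * trace M ^ 2 + det M * trace N ^ 2
      + trace (M * N) ^ 2 - trace M * trace N * trace (M * N) - 2 * det M * det N := by
  simp [det_fin_two, trace_fin_two, adjugate_fin_two, mul_apply, Fin.sum_univ_two]; ring

end Matrix

theorem reducible_iff_fricke (A B : Matrix.SpecialLinearGroup (Fin 2) ℂ) :
    ((∃ v : Fin 2 → ℂ, v ≠ 0 ∧ ∃ a b : ℂ,
        (A : Matrix (Fin 2) (Fin 2) ℂ).mulVec v = a • v ∧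
        (B : Matrix (Fin 2) (Fin 2) ℂ).mulVec v = b • v) ↔
      (Matrix.trace (A : Matrix (Fin 2) (Fin 2) ℂ)) ^ 2 +
        (Matrix.trace (B : Matrix (Fin 2) (Fin 2) ℂ)) ^ 2 +
        (Matrix.trace ((A * B : Matrix.SpecialLinearGroup (Fin 2) ℂ) :
            Matrix (Fin 2) (Fin 2) ℂ)) ^ 2 -
        Matrix.trace (A : Matrix (Fin 2) (Fin 2) ℂ) *
          Matrix.trace (B : Matrix (Fin 2) (Fin 2) ℂ) *
          Matrix.trace ((A * B : Matrix.SpecialLinearGroup (Fin 2) ℂ) :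
            Matrix (Fin 2) (Fin 2) ℂ) - 4 = 0) ∧
    ((Matrix.trace (A : Matrix (Fin 2) (Fin 2) ℂ)) ^ 2 +
        (Matrix.trace (B : Matrix (Fin 2) (Fin 2) ℂ)) ^ 2 +
        (Matrix.trace ((A * B : Matrix.SpecialLinearGroup (Fin 2) ℂ) :
            Matrix (Fin 2) (Fin 2) ℂ)) ^ 2 -
        Matrix.trace (A : Matrix (Fin 2) (Fin 2) ℂ) *
          Matrix.trace (B : Matrix (Fin 2) (Fin 2) ℂ) *
          Matrix.trace ((A * B : Matrix.SpecialLinearGroup (Fin 2) ℂ) :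
            Matrix (Fin 2) (Fin 2) ℂ) - 4 = 0 ↔
      Matrix.trace ((A * B * A⁻¹ * B⁻¹ : Matrix.SpecialLinearGroup (Fin 2) ℂ) :
          Matrix (Fin 2) (Fin 2) ℂ) = 2) := by
  have hAB : ((A * B : SpecialLinearGroup (Fin 2) ℂ) : Matrix (Fin 2) (Fin 2) ℂ) = A * B := rfl
  have hcomm : ((A * B * A⁻¹ * B⁻¹ : SpecialLinearGroup (Fin 2) ℂ) : Matrix (Fin 2) (Fin 2) ℂ) =
      A * B * adjugate A.1 * adjugate B.1 := rfl
  have hdet := det_mul_sub_mul_fin_two (A : Matrix (Fin 2) (Fin 2) ℂ) B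
  have hfricke := trace_mul_mul_adjugate_mul_adjugate_fin_two (A : Matrix (Fin 2) (Fin 2) ℂ) B
  rw [A.det_coe, B.det_coe] at hdet hfricke
  rw [hAB, hcomm, exists_common_eigenvector_iff_det_mul_sub_mul_eq_zero, hdet, hfricke]
  exact ⟨by constructor <;> intro h <;> linear_combination -h,
    by constructor <;> intro h <;> linear_combination h⟩
end

section
/- Let k₁, k₂, k₃, k₄ ∈ ℂ and set A = k₁k₂ + k₃k₄, B = k₂k₃ + k₁k₄, C = k₁k₃ + k₂k₄, D = 4 − k₁² − k₂² − k₃² − k₄² − k₁k₂k₃k₄. Fix t ∈ ℂ with t ≠ ±2. Then the polynomial t² + y² + z² + t·y·z − A·t − B·y − C·z − D ∈ ℂ[y,z] is a product of two polynomials of degree 1 if and only if (k₁² + k₂² + t² − t·k₁k₂ − 4)·(k₃² + k₄² + t² − t·k₃k₄ − 4) = 0. -/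
/-!
The fiber is the affine conic `y² + t y z + z² - B y - C z + (t² - A t - D) = 0`. A binary
quadric `a y² + b y z + c z² + d y + e z + f` that is a product of two affine forms has
vanishing discriminant `4acf + bde - ae² - cd² - fb²`, the determinant of its symmetric matrix
`[[2a, b, d], [b, 2c, e], [d, e, 2f]]` up to a factor `2`, since that matrix then has rank at
most two. Conversely, when `a = 1` and the quadratic part is nondegenerate (`b² ≠ 4c`), it
splits over an algebraically closed field as `(y + ω z)(y + (b - ω) z)`, and the constant terms
of the two factors are forced by `d` and `e`; the discriminant is exactly the obstruction to
their product being `f`. For the fiber the discriminant is, by a polynomial identity, minus the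
product of the two Fricke expressions.
-/

open MvPolynomial

variable {R K : Type*}

theorem MvPolynomial.eq_C_add_sum_of_totalDegree_le_one [CommSemiring R] {σ : Type*} [Fintype σ]
    {p : MvPolynomial σ R} (hp : p.totalDegree ≤ 1) :
    p = C (coeff 0 p) + ∑ i, C (coeff (Finsupp.single i 1) p) * X i := by
  classical
  ext d
  simp only [coeff_add, coeff_C, coeff_sum, coeff_C_mul, coeff_X, mul_ite, mul_one, mul_zero]
  rcases Nat.lt_or_ge 1 d.degree with hd | hd
  · have h0 : (0 : σ →₀ ℕ) ≠ d := fun h => by simp [← h] at hd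
    have h1 : ∀ i, Finsupp.single i 1 ≠ d := fun i h => by simp [← h] at hd
    simp [h0, h1, coeff_eq_zero_of_totalDegree_lt (hp.trans_lt hd)]
  · obtain h | h : d.degree = 0 ∨ d.degree = 1 := by omega
    · obtain rfl := (Finsupp.degree_eq_zero_iff d).1 h
      simp
    · obtain ⟨a, rfl⟩ := (Finsupp.sum_eq_one_iff _).mp h
      rw [if_neg (Finsupp.single_ne_zero.2 one_ne_zero).symm, zero_add]
      simp [Finsupp.single_left_inj one_ne_zero]

noncomputable def affinePoly [CommSemiring R] (a₀ a₁ a₂ : R) : MvPolynomial (Fin 2) R :=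
  C a₀ + C a₁ * X 0 + C a₂ * X 1

noncomputable def binaryQuadric [CommSemiring R] (a b c d e f : R) : MvPolynomial (Fin 2) R :=
  C a * X 0 ^ 2 + C b * X 0 * X 1 + C c * X 1 ^ 2 + C d * X 0 + C e * X 1 + C f

def quadricDisc [CommRing R] (a b c d e f : R) : R :=
  4 * a * c * f + b * d * e - a * e ^ 2 - c * d ^ 2 - f * b ^ 2

theorem exists_eq_affinePoly_of_totalDegree_le_one [CommSemiring R]
    {p : MvPolynomial (Fin 2) R} (hp : p.totalDegree ≤ 1) :
    ∃ a₀ a₁ a₂, p = affinePoly a₀ a₁ a₂ :=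
  ⟨_, _, _, (eq_C_add_sum_of_totalDegree_le_one hp).trans <| by
    rw [Fin.sum_univ_two, ← add_assoc]; rfl⟩

theorem totalDegree_affinePoly_one [CommSemiring R] [Nontrivial R] (a₀ a₂ : R) :
    (affinePoly a₀ 1 a₂).totalDegree = 1 := by
  apply le_antisymm
  · simp only [affinePoly, C_mul_X_eq_monomial]
    grw [totalDegree_add, totalDegree_add, totalDegree_monomial_le, totalDegree_monomial_le]
    simp
  · have h : coeff (Finsupp.single 0 1) (affinePoly a₀ 1 a₂) ≠ 0 := by
      simp [affinePoly, coeff_X, coeff_C, Finsupp.ext_iff, Fin.forall_fin_two,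
        Finsupp.single_apply]
    simpa using le_totalDegree (mem_support_iff.2 h)

theorem affinePoly_mul_affinePoly [CommSemiring R] (a₀ a₁ a₂ b₀ b₁ b₂ : R) :
    affinePoly a₀ a₁ a₂ * affinePoly b₀ b₁ b₂ =
      binaryQuadric (a₁ * b₁) (a₁ * b₂ + a₂ * b₁) (a₂ * b₂) (a₀ * b₁ + a₁ * b₀)
        (a₀ * b₂ + a₂ * b₀) (a₀ * b₀) := by
  simp only [affinePoly, binaryQuadric, map_add, map_mul]
  ring

theorem coeff_binaryQuadric [CommSemiring R] (a b c d e f : R) :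
    coeff (Finsupp.single 0 2) (binaryQuadric a b c d e f) = a ∧
      coeff (Finsupp.single 0 1 + Finsupp.single 1 1) (binaryQuadric a b c d e f) = b ∧
      coeff (Finsupp.single 1 2) (binaryQuadric a b c d e f) = c ∧
      coeff (Finsupp.single 0 1) (binaryQuadric a b c d e f) = d ∧
      coeff (Finsupp.single 1 1) (binaryQuadric a b c d e f) = e ∧
      coeff 0 (binaryQuadric a b c d e f) = f := by
  simp [binaryQuadric, coeff_X, coeff_X_pow, mul_assoc, coeff_C, coeff_mul_X', Finsupp.ext_iff,
    Fin.forall_fin_two, Finsupp.single_apply]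

theorem binaryQuadric_injective [CommSemiring R] {a b c d e f a' b' c' d' e' f' : R}
    (h : binaryQuadric a b c d e f = binaryQuadric a' b' c' d' e' f') :
    a = a' ∧ b = b' ∧ c = c' ∧ d = d' ∧ e = e' ∧ f = f' := by
  obtain ⟨ha, hb, hc, hd, he, hf⟩ := coeff_binaryQuadric a b c d e f
  obtain ⟨ha', hb', hc', hd', he', hf'⟩ := coeff_binaryQuadric a' b' c' d' e' f'
  rw [h] at ha hb hc hd he hf
  exact ⟨ha.symm.trans ha', hb.symm.trans hb', hc.symm.trans hc', hd.symm.trans hd',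
    he.symm.trans he', hf.symm.trans hf'⟩

theorem quadricDisc_eq_zero_of_binaryQuadric_eq_mul [CommRing R] {a b c d e f : R}
    {p q : MvPolynomial (Fin 2) R} (hp : p.totalDegree ≤ 1) (hq : q.totalDegree ≤ 1)
    (h : binaryQuadric a b c d e f = p * q) : quadricDisc a b c d e f = 0 := by
  obtain ⟨a₀, a₁, a₂, rfl⟩ := exists_eq_affinePoly_of_totalDegree_le_one hp
  obtain ⟨b₀, b₁, b₂, rfl⟩ := exists_eq_affinePoly_of_totalDegree_le_one hq
  rw [affinePoly_mul_affinePoly] at h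
  obtain ⟨rfl, rfl, rfl, rfl, rfl, rfl⟩ := binaryQuadric_injective h
  unfold quadricDisc
  ring

theorem exists_binaryQuadric_eq_affinePoly_mul [Field K] [IsAlgClosed K] {b c d e f : K}
    (hb : b ^ 2 - 4 * c ≠ 0) (h : quadricDisc 1 b c d e f = 0) :
    ∃ ω u v, binaryQuadric 1 b c d e f = affinePoly u 1 ω * affinePoly v 1 (b - ω) := by
  obtain ⟨ω, hω⟩ : ∃ ω, ω ^ 2 - b * ω + c = 0 := by
    obtain ⟨ω, hω⟩ := IsAlgClosed.exists_root (Polynomial.C 1 * Polynomial.X ^ 2 +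
      Polynomial.C (-b) * Polynomial.X + Polynomial.C c) (by
        rw [Polynomial.degree_quadratic one_ne_zero]; decide)
    exact ⟨ω, by simpa [sub_eq_add_neg] using hω⟩
  have hs : 2 * ω - b ≠ 0 := by
    refine (pow_ne_zero_iff two_ne_zero).1 (ne_of_eq_of_ne ?_ hb)
    linear_combination 4 * hω
  obtain ⟨u, hu⟩ : ∃ u, u * (2 * ω - b) = ω * d - e := ⟨_, div_mul_cancel₀ _ hs⟩
  refine ⟨ω, u, d - u, ?_⟩
  rw [affinePoly_mul_affinePoly]
  congr 1
  · ring
  · ring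
  · linear_combination hω
  · ring
  · linear_combination hu
  · apply mul_left_cancel₀ (pow_ne_zero 2 hs)
    unfold quadricDisc at h
    linear_combination -h - (d ^ 2 - 4 * f) * hω -
      ((2 * ω - b) * d - (ω * d - e) - u * (2 * ω - b)) * hu

theorem exists_binaryQuadric_eq_mul_iff [Field K] [IsAlgClosed K] {b c d e f : K}
    (hb : b ^ 2 - 4 * c ≠ 0) :
    (∃ p q : MvPolynomial (Fin 2) K, p.totalDegree = 1 ∧ q.totalDegree = 1 ∧
      binaryQuadric 1 b c d e f = p * q) ↔ quadricDisc 1 b c d e f = 0 := by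
  constructor
  · rintro ⟨p, q, hp, hq, h⟩
    exact quadricDisc_eq_zero_of_binaryQuadric_eq_mul hp.le hq.le h
  · intro h
    obtain ⟨ω, u, v, huv⟩ := exists_binaryQuadric_eq_affinePoly_mul hb h
    exact ⟨_, _, totalDegree_affinePoly_one u ω, totalDegree_affinePoly_one v (b - ω), huv⟩

theorem four_holed_sphere_degenerate_fiber (k₁ k₂ k₃ k₄ t : ℂ)
    (ht : t ≠ 2) (ht' : t ≠ -2) :
    (∃ p q : MvPolynomial (Fin 2) ℂ, p.totalDegree = 1 ∧ q.totalDegree = 1 ∧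
      (C (t ^ 2) + (X 0) ^ 2 + (X 1) ^ 2 + C t * X 0 * X 1 -
        C ((k₁ * k₂ + k₃ * k₄) * t) - C (k₂ * k₃ + k₁ * k₄) * X 0 -
        C (k₁ * k₃ + k₂ * k₄) * X 1 -
        C (4 - k₁ ^ 2 - k₂ ^ 2 - k₃ ^ 2 - k₄ ^ 2 - k₁ * k₂ * k₃ * k₄) :
          MvPolynomial (Fin 2) ℂ) = p * q) ↔
    (k₁ ^ 2 + k₂ ^ 2 + t ^ 2 - t * k₁ * k₂ - 4) *
      (k₃ ^ 2 + k₄ ^ 2 + t ^ 2 - t * k₃ * k₄ - 4) = 0 := by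
  set A := k₁ * k₂ + k₃ * k₄
  set B := k₂ * k₃ + k₁ * k₄
  set D := 4 - k₁ ^ 2 - k₂ ^ 2 - k₃ ^ 2 - k₄ ^ 2 - k₁ * k₂ * k₃ * k₄
  have hfiber : (C (t ^ 2) + X 0 ^ 2 + X 1 ^ 2 + C t * X 0 * X 1 - C (A * t) - C B * X 0 -
      C (k₁ * k₃ + k₂ * k₄) * X 1 - C D : MvPolynomial (Fin 2) ℂ) =
      binaryQuadric 1 t 1 (-B) (-(k₁ * k₃ + k₂ * k₄)) (t ^ 2 - A * t - D) := by
    simp only [binaryQuadric, map_one, map_neg, map_sub]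
    ring
  have ht2 : t ^ 2 - 4 * 1 ≠ 0 := by
    have : (t - 2) * (t + 2) ≠ 0 :=
      mul_ne_zero (sub_ne_zero.2 ht) (by rwa [Ne, add_eq_zero_iff_eq_neg])
    exact ne_of_eq_of_ne (by ring) this
  have hdisc : quadricDisc 1 t 1 (-B) (-(k₁ * k₃ + k₂ * k₄)) (t ^ 2 - A * t - D) =
      -((k₁ ^ 2 + k₂ ^ 2 + t ^ 2 - t * k₁ * k₂ - 4) *
        (k₃ ^ 2 + k₄ ^ 2 + t ^ 2 - t * k₃ * k₄ - 4)) := by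
    simp only [quadricDisc, A, B, D]
    ring
  rw [hfiber, exists_binaryQuadric_eq_mul_iff ht2, hdisc, neg_eq_zero]
end

section
/- Let k ∈ ℂ and let x, y, z ∈ ℂ[T] be polynomials satisfying x² + y² + z² = xyz + k. Suppose deg x > deg y ≥ deg z and x is nonconstant. Then the triple (yz − x, y, z) also satisfies the equation, and deg(yz − x) < deg x (where the degree of the zero polynomial is taken to be −∞). -/
/-!
With `x' = yz - x`, the polynomials `x` and `x'` are the two roots of the monic quadratic
`W² - yz W + (y² + z² - k)`, so Vieta gives `x x' = y² + z² - k`. The right-hand side has degree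
less than `2 deg x`, hence `deg x + deg x' < 2 deg x`, i.e. `deg x' < deg x`.
-/

open Polynomial

namespace Polynomial

theorem degree_mul_lt_add_of_lt {R : Type*} [Semiring R] {p q r s : R[X]}
    (hp : p.degree < r.degree) (hq : q.degree < s.degree) :
    (p * q).degree < r.degree + s.degree := by
  refine (degree_mul_le p q).trans_lt ?_
  rcases eq_or_ne q.degree ⊥ with hq₀ | hq₀
  · rw [hq₀, WithBot.add_bot]
    exact WithBot.bot_lt_iff_ne_bot.mpr <|
      WithBot.add_ne_bot.mpr ⟨hp.ne_bot, hq.ne_bot⟩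
  · exact WithBot.add_lt_add_of_lt_of_le hq₀ hp hq.le

theorem degree_sq_add_sq_sub_C_lt {R : Type*} [Ring R] {p q r : R[X]} (k : R)
    (hp : p.degree < r.degree) (hq : q.degree < r.degree) (hr : 0 < r.degree) :
    (p ^ 2 + q ^ 2 - C k).degree < r.degree + r.degree := by
  have hC : (C k).degree < r.degree + r.degree :=
    degree_C_le.trans_lt (hr.trans_le (le_add_of_nonneg_right hr.le))
  rw [sq, sq]
  exact (degree_sub_le _ _).trans_lt <| max_lt ((degree_add_le _ _).trans_lt <|
    max_lt (degree_mul_lt_add_of_lt hp hp) (degree_mul_lt_add_of_lt hq hq)) hC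

end Polynomial

theorem polynomial_vieta_descent (k : ℂ) (x y z : Polynomial ℂ)
    (heq : x ^ 2 + y ^ 2 + z ^ 2 = x * y * z + C k)
    (hxy : y.degree < x.degree) (hyz : z.degree ≤ y.degree)
    (hx : 0 < x.degree) :
    (y * z - x) ^ 2 + y ^ 2 + z ^ 2 = (y * z - x) * y * z + C k ∧
      (y * z - x).degree < x.degree := by
  refine ⟨by linear_combination heq, ?_⟩
  have vieta : x * (y * z - x) = y ^ 2 + z ^ 2 - C k := by linear_combination -heq
  apply lt_of_add_lt_add_left (a := x.degree)
  rw [← degree_mul, vieta]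
  exact degree_sq_add_sq_sub_C_lt k hxy (hyz.trans_lt hxy) hx
end

section
/- The Markoff equation x² + y² + z² = 3xyz has no nonconstant solutions in polynomials x, y, z ∈ ℝ[T]. -/
open Polynomial

private lemma sos_zero (p q : Polynomial ℝ) (h : p ^ 2 + q ^ 2 = 0) :
    p = 0 ∧ q = 0 := by
  have hp : ∀ t : ℝ, p.eval t = 0 ∧ q.eval t = 0 := by
    intro t
    have := congrArg (eval t) h
    simp only [eval_add, eval_pow, eval_zero] at this
    constructor <;> nlinarith [sq_nonneg (p.eval t), sq_nonneg (q.eval t)]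
  constructor
  · exact Polynomial.funext fun t => by simpa using (hp t).1
  · exact Polynomial.funext fun t => by simpa using (hp t).2

private lemma sos_natDegree (p q : Polynomial ℝ) (hp : p ≠ 0)
    (h : q.natDegree ≤ p.natDegree) : (p ^ 2 + q ^ 2).natDegree = 2 * p.natDegree := by
  rcases lt_or_eq_of_le h with hlt | hd
  · have : (q ^ 2).natDegree < (p ^ 2).natDegree := by
      simp only [natDegree_pow]; omega
    rw [natDegree_add_eq_left_of_natDegree_lt this, natDegree_pow]
  · have hle : (p ^ 2 + q ^ 2).natDegree ≤ 2 * p.natDegree := by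
      refine natDegree_add_le_of_degree_le ?_ ?_
      · simpa [natDegree_pow] using le_rfl
      · simp only [natDegree_pow]; omega
    have hco : (p ^ 2 + q ^ 2).coeff (2 * p.natDegree) ≠ 0 := by
      have h1 : (p ^ 2).coeff (2 * p.natDegree) = p.leadingCoeff ^ 2 := by
        rw [show 2 * p.natDegree = (p ^ 2).natDegree by rw [natDegree_pow],
          coeff_natDegree, leadingCoeff_pow]
      have h2 : (q ^ 2).coeff (2 * q.natDegree) = q.leadingCoeff ^ 2 := by
        rw [show 2 * q.natDegree = (q ^ 2).natDegree by rw [natDegree_pow],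
          coeff_natDegree, leadingCoeff_pow]
      rw [hd] at h2
      rw [coeff_add, h1, h2]
      have := leadingCoeff_ne_zero.mpr hp
      positivity
    exact le_antisymm hle (le_natDegree_of_ne_zero hco)

private lemma coeff_sq (q : Polynomial ℝ) (a : ℕ) (h : q.natDegree ≤ a) :
    (q ^ 2).coeff (2 * a) = (q.coeff a) ^ 2 := by
  by_cases hq : q = 0
  · simp [hq]
  rcases lt_or_eq_of_le h with hlt | hd
  · rw [coeff_eq_zero_of_natDegree_lt (by simp only [natDegree_pow]; omega),
      coeff_eq_zero_of_natDegree_lt hlt]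
    ring
  · rw [← hd, show 2 * q.natDegree = (q ^ 2).natDegree by rw [natDegree_pow],
      coeff_natDegree, leadingCoeff_pow]
    rfl

private lemma sos3_natDegree (p q r : Polynomial ℝ) (hp : p ≠ 0)
    (h1 : q.natDegree ≤ p.natDegree) (h2 : r.natDegree ≤ p.natDegree) :
    (p ^ 2 + q ^ 2 + r ^ 2).natDegree = 2 * p.natDegree := by
  have hle : (p ^ 2 + q ^ 2 + r ^ 2).natDegree ≤ 2 * p.natDegree := by
    refine natDegree_add_le_of_degree_le (natDegree_add_le_of_degree_le ?_ ?_) ?_ <;>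
      simp only [natDegree_pow] <;> omega
  have hco : (p ^ 2 + q ^ 2 + r ^ 2).coeff (2 * p.natDegree) ≠ 0 := by
    rw [coeff_add, coeff_add, coeff_sq p _ le_rfl, coeff_sq q _ h1, coeff_sq r _ h2]
    have hl : p.coeff p.natDegree ≠ 0 := by
      rw [coeff_natDegree]; exact leadingCoeff_ne_zero.mpr hp
    positivity
  exact le_antisymm hle (le_natDegree_of_ne_zero hco)

private lemma markoff_step (n : ℕ)
    (IH : ∀ x y z : Polynomial ℝ, x.natDegree + y.natDegree + z.natDegree < n →
      x ^ 2 + y ^ 2 + z ^ 2 = 3 * (x * y * z) →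
      x.natDegree = 0 ∧ y.natDegree = 0 ∧ z.natDegree = 0)
    (x y z : Polynomial ℝ) (hn : x.natDegree + y.natDegree + z.natDegree = n)
    (heq : x ^ 2 + y ^ 2 + z ^ 2 = 3 * (x * y * z))
    (hzy : z.natDegree ≤ y.natDegree) (hyx : y.natDegree ≤ x.natDegree) :
    x.natDegree = 0 ∧ y.natDegree = 0 ∧ z.natDegree = 0 := by
  by_cases hx : x = 0
  · rw [hx] at heq
    have h0 : y ^ 2 + z ^ 2 = 0 := by linear_combination heq
    obtain ⟨hy0, hz0⟩ := sos_zero y z h0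
    simp [hx, hy0, hz0]
  by_cases hz : z = 0
  · have h0 : x ^ 2 + y ^ 2 = 0 := by rw [hz] at heq; linear_combination heq
    obtain ⟨hx0, _⟩ := sos_zero x y h0
    exact absurd hx0 hx
  by_cases hy : y = 0
  · have h0 : x ^ 2 + z ^ 2 = 0 := by rw [hy] at heq; linear_combination heq
    obtain ⟨hx0, _⟩ := sos_zero x z h0
    exact absurd hx0 hx
  have hL : (x ^ 2 + y ^ 2 + z ^ 2).natDegree = 2 * x.natDegree :=
    sos3_natDegree x y z hx hyx (hzy.trans hyx)
  have hR : (3 * (x * y * z)).natDegree = x.natDegree + y.natDegree + z.natDegree := by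
    rw [show (3 : Polynomial ℝ) = C 3 from (map_ofNat C 3).symm, natDegree_C_mul (by norm_num),
      natDegree_mul (mul_ne_zero hx hy) hz, natDegree_mul hx hy]
  have habc : x.natDegree = y.natDegree + z.natDegree := by
    have := congrArg natDegree heq
    rw [hL, hR] at this
    omega
  by_cases hc : z.natDegree = 0
  · -- z is a nonzero constant
    set k : ℝ := z.coeff 0 with hkdef
    have hzk : z = C k := (Polynomial.eq_C_of_natDegree_eq_zero hc)
    have hk : k ≠ 0 := fun h => hz (by rw [hzk, h, map_zero])
    have heq' : x ^ 2 + y ^ 2 + (C k) ^ 2 = 3 * (x * y * C k) := by rw [← hzk]; exact heq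
    set u : Polynomial ℝ := 2 * x - 3 * C k * y with hu
    have hid : u ^ 2 + (4 - 9 * (C k) ^ 2) * y ^ 2 + 4 * (C k) ^ 2 = 0 := by
      rw [hu]; linear_combination (4 : Polynomial ℝ) * heq'
    rcases le_or_gt (9 * k ^ 2) 4 with h4 | h4
    · exfalso
      have hev := congrArg (eval 0) hid
      simp only [eval_add, eval_mul, eval_sub, eval_pow, eval_C, eval_zero, eval_ofNat] at hev
      have hk2 : 0 < k ^ 2 := by positivity
      nlinarith [sq_nonneg (u.eval 0), sq_nonneg (y.eval 0),
        mul_nonneg (by linarith : (0:ℝ) ≤ 4 - 9 * k ^ 2) (sq_nonneg (y.eval 0))]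
    · set m : ℝ := Real.sqrt (9 * k ^ 2 - 4) with hmdef
      have hm2 : m ^ 2 = 9 * k ^ 2 - 4 := Real.sq_sqrt (by linarith)
      have hm0 : 0 < m := Real.sqrt_pos.mpr (by linarith)
      have hC2 : (C m) ^ 2 = 9 * (C k) ^ 2 - 4 := by
        have := congrArg C hm2
        simpa only [map_pow, map_sub, map_mul, map_ofNat] using this
      have hfac : (u + C m * y) * (u - C m * y) = C (-(4 * k ^ 2)) := by
        have hc3 : C (-(4 * k ^ 2)) = -(4 * (C k) ^ 2) := by
          simp only [map_neg, map_mul, map_pow, map_ofNat]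
        rw [hc3]
        linear_combination hid - y ^ 2 * hC2
      have hprod : (u + C m * y) * (u - C m * y) ≠ 0 := by
        rw [hfac, ne_eq, C_eq_zero]
        simp [hk]
      have hf : u + C m * y ≠ 0 := left_ne_zero_of_mul hprod
      have hg : u - C m * y ≠ 0 := right_ne_zero_of_mul hprod
      have hdeg0 : (u + C m * y).natDegree + (u - C m * y).natDegree = 0 := by
        rw [← natDegree_mul hf hg, hfac, natDegree_C]
      have h5 : C (2 * m) * y = (u + C m * y) - (u - C m * y) := by
        rw [map_mul, map_ofNat]; ring
      have hb : y.natDegree = 0 := by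
        have h6 : (C (2 * m) * y).natDegree = y.natDegree :=
          natDegree_C_mul (by positivity)
        have h7 : ((u + C m * y) - (u - C m * y)).natDegree ≤ 0 := by
          refine (natDegree_sub_le _ _).trans ?_
          omega
        rw [h5] at h6
        omega
      refine ⟨by omega, hb, hc⟩
  · -- descent
    set x' : Polynomial ℝ := 3 * y * z - x with hx'
    have hmul : x * x' = y ^ 2 + z ^ 2 := by rw [hx']; linear_combination -heq
    have hx'0 : x' ≠ 0 := by
      intro h0
      rw [h0, mul_zero] at hmul
      exact hy (sos_zero y z hmul.symm).1
    have hdeg : x.natDegree + x'.natDegree = 2 * y.natDegree := by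
      have h8 := natDegree_mul hx hx'0
      rw [hmul, sos_natDegree y z hy hzy] at h8
      omega
    have heq2 : x' ^ 2 + y ^ 2 + z ^ 2 = 3 * (x' * y * z) := by
      rw [hx']; linear_combination heq
    obtain ⟨h1, h2, h3⟩ := IH x' y z (by omega) heq2
    exact absurd h3 hc

private lemma markoff_aux : ∀ n : ℕ, ∀ x y z : Polynomial ℝ,
    x.natDegree + y.natDegree + z.natDegree = n →
    x ^ 2 + y ^ 2 + z ^ 2 = 3 * (x * y * z) →
    x.natDegree = 0 ∧ y.natDegree = 0 ∧ z.natDegree = 0 := by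
  intro n
  induction n using Nat.strong_induction_on with
  | _ n IH =>
  intro x y z hn heq
  have IH' : ∀ x y z : Polynomial ℝ, x.natDegree + y.natDegree + z.natDegree < n →
      x ^ 2 + y ^ 2 + z ^ 2 = 3 * (x * y * z) →
      x.natDegree = 0 ∧ y.natDegree = 0 ∧ z.natDegree = 0 :=
    fun a b c h he => IH _ h a b c rfl he
  rcases le_total x.natDegree y.natDegree with h1 | h1 <;>
    rcases le_total y.natDegree z.natDegree with h2 | h2 <;>
    rcases le_total x.natDegree z.natDegree with h3 | h3
  · obtain ⟨A, B, C⟩ := markoff_step n IH' z y x (by omega)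
      (by linear_combination heq) h1 h2
    exact ⟨C, B, A⟩
  · obtain ⟨A, B, C⟩ := markoff_step n IH' z y x (by omega)
      (by linear_combination heq) h1 h2
    exact ⟨C, B, A⟩
  · obtain ⟨A, B, C⟩ := markoff_step n IH' y z x (by omega)
      (by linear_combination heq) h3 h2
    exact ⟨C, A, B⟩
  · obtain ⟨A, B, C⟩ := markoff_step n IH' y x z (by omega)
      (by linear_combination heq) h3 h1
    exact ⟨B, A, C⟩
  · obtain ⟨A, B, C⟩ := markoff_step n IH' z x y (by omega)
      (by linear_combination heq) h1 h3
    exact ⟨B, C, A⟩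
  · obtain ⟨A, B, C⟩ := markoff_step n IH' x z y (by omega)
      (by linear_combination heq) h2 h3
    exact ⟨A, C, B⟩
  · obtain ⟨A, B, C⟩ := markoff_step n IH' x y z (by omega)
      (by linear_combination heq) h2 h1
    exact ⟨A, B, C⟩
  · obtain ⟨A, B, C⟩ := markoff_step n IH' x y z (by omega)
      (by linear_combination heq) h2 h1
    exact ⟨A, B, C⟩

theorem markoff_no_nonconstant_polynomial_solutions (x y z : Polynomial ℝ)
    (heq : x ^ 2 + y ^ 2 + z ^ 2 = 3 * (x * y * z)) :
    x.degree ≤ 0 ∧ y.degree ≤ 0 ∧ z.degree ≤ 0 := by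
  obtain ⟨h1, h2, h3⟩ := markoff_aux _ x y z rfl heq
  refine ⟨?_, ?_, ?_⟩ <;>
  · rw [show (0 : WithBot ℕ) = ((0 : ℕ) : WithBot ℕ) by rfl]
    rw [← natDegree_le_iff_degree_le]
    omega
end
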